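/- Let R be a ring, B a Boolean subring of R whose idempotents include a family V of pairwise orthogonal idempotents with R = ⊕_{v∈V} Rv. Let v ∈ V, N a maximal R-submodule of Rv, and let S be a set of maximal left ideals P of R such that each P ∩ B is a distinct maximal ideal of B and R/P ≅ Rv/N for all P ∈ S. Then |S| ≤ dim_K(Rv/N) whenever R is a K-algebra over a field K. (The annihilated elements x_P ∈ Rv/N corresponding to distinct P ∈ S are K-linearly independent.) -/
import Mathlib


/-- A left ideal of a (possibly non-unital) ring, given as a set. -/
def IsLeftIdeal {R : Type*} [NonUnitalRing R] (I : Set R) : Prop :=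
  (0 : R) ∈ I ∧ (∀ x ∈ I, ∀ y ∈ I, x + y ∈ I) ∧ (∀ x ∈ I, -x ∈ I) ∧
    ∀ (r : R), ∀ x ∈ I, r * x ∈ I

/-- A maximal left ideal of `R`. -/
def IsMaxLeftIdeal {R : Type*} [NonUnitalRing R] (M : Set R) : Prop :=
  IsLeftIdeal M ∧ M ≠ Set.univ ∧
    ∀ J : Set R, IsLeftIdeal J → M ⊆ J → J = M ∨ J = Set.univ

/-- `N` is a maximal `R`-submodule of the left ideal with underlying set `U`. -/
def IsMaxSub {R : Type*} [NonUnitalRing R] (N U : Set R) : Prop :=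
  IsLeftIdeal N ∧ N ⊆ U ∧ N ≠ U ∧
    ∀ J : Set R, IsLeftIdeal J → N ⊆ J → J ⊆ U → J = N ∨ J = U

/-- The set `Rv = {rv : r ∈ R}`. -/
def Rset {R : Type*} [NonUnitalRing R] (v : R) : Set R := {x : R | ∃ t : R, x = t * v}

/-- `QuotIso U N₁ V N₂`: the quotient left `R`-modules `U/N₁` and `V/N₂` are
isomorphic. -/
def QuotIso {R : Type*} [NonUnitalRing R] (U N₁ V N₂ : Set R) : Prop :=
  ∃ f : R → R,
    (∀ x ∈ U, f x ∈ V) ∧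
    (∀ x ∈ U, ∀ y ∈ U, f (x + y) - (f x + f y) ∈ N₂) ∧
    (∀ (r : R), ∀ x ∈ U, f (r * x) - r * f x ∈ N₂) ∧
    (∀ y ∈ V, ∃ x ∈ U, f x - y ∈ N₂) ∧
    (∀ x ∈ U, (x ∈ N₁ ↔ f x ∈ N₂))

/-- `B` is a subring (not necessarily unital) of `R`, given as a set. -/
def IsNUSubring {R : Type*} [NonUnitalRing R] (B : Set R) : Prop :=
  (0 : R) ∈ B ∧ (∀ x ∈ B, ∀ y ∈ B, x + y ∈ B) ∧ (∀ x ∈ B, -x ∈ B) ∧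
    ∀ x ∈ B, ∀ y ∈ B, x * y ∈ B

/-- `J` is a (two-sided) ideal of the subring with underlying set `B`. -/
def IsIdealOf {R : Type*} [NonUnitalRing R] (J B : Set R) : Prop :=
  J ⊆ B ∧ (0 : R) ∈ J ∧ (∀ x ∈ J, ∀ y ∈ J, x + y ∈ J) ∧ (∀ x ∈ J, -x ∈ J) ∧
    ∀ b ∈ B, ∀ x ∈ J, b * x ∈ J ∧ x * b ∈ J

/-- A maximal ideal of the subring with underlying set `B`. -/
def IsMaxIdealOf {R : Type*} [NonUnitalRing R] (J B : Set R) : Prop :=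
  IsIdealOf J B ∧ J ≠ B ∧ ∀ I : Set R, IsIdealOf I B → J ⊆ I → I = J ∨ I = B

/-- `Rv = {rv : r ∈ R}` as a `K`-subspace of the `K`-algebra `R`. -/
def RsetSub (K : Type*) {R : Type*} [Field K] [NonUnitalRing R] [Module K R]
    [IsScalarTower K R R] (v : R) : Submodule K R where
  carrier := Rset v
  add_mem' := by
    rintro a b ⟨t, rfl⟩ ⟨t', rfl⟩
    exact ⟨t + t', (add_mul t t' v).symm⟩
  zero_mem' := ⟨0, (zero_mul v).symm⟩
  smul_mem' := by
    rintro k x ⟨t, rfl⟩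
    exact ⟨k • t, (smul_mul_assoc k t v).symm⟩

/-- In a Boolean subring every element has additive order 2. -/
theorem nuBool_two {R : Type*} [NonUnitalRing R] {B : Set R}
    (hsub : IsNUSubring B) (hBool : ∀ b ∈ B, b * b = b) {z : R} (hz : z ∈ B) :
    z + z = 0 := by
  have hzz : z + z ∈ B := hsub.2.1 z hz z hz
  have h := hBool _ hzz
  have hz2 := hBool z hz
  have h2 : z + z + (z + z) = z + z := by
    calc z + z + (z + z) = (z + z) * (z + z) := by
          simp only [mul_add, add_mul, hz2]
      _ = z + z := h
  exact add_eq_left.mp h2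

/-- A Boolean subring is commutative. -/
theorem nuBool_comm {R : Type*} [NonUnitalRing R] {B : Set R}
    (hsub : IsNUSubring B) (hBool : ∀ b ∈ B, b * b = b) :
    ∀ x ∈ B, ∀ y ∈ B, x * y = y * x := by
  intro x hx y hy
  have hxy : x + y ∈ B := hsub.2.1 x hx y hy
  have h1 : x * x + x * y + (y * x + y * y) = x + y := by
    rw [← mul_add, ← mul_add, ← add_mul]; exact hBool _ hxy
  rw [hBool x hx, hBool y hy] at h1
  have h3 : x + (x * y + y * x) + y = x + y := by rw [← h1]; abel
  have h4 : x + (x * y + y * x) = x := add_right_cancel h3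
  have h5 : x * y + y * x = 0 := add_eq_left.mp (by rw [← add_assoc] at h4 ⊢; exact h4)
  have h6 : y * x + y * x = 0 :=
    nuBool_two hsub hBool (hsub.2.2.2 y hy x hx)
  calc x * y = -(y * x) := eq_neg_of_add_eq_zero_left h5
    _ = y * x := neg_eq_of_add_eq_zero_left h6

/-- Products of elements of `B` outside a maximal ideal `M` of `B` stay outside `M`. -/
theorem nuBool_mul_notMem_max {R : Type*} [NonUnitalRing R] {B M : Set R}
    (hsub : IsNUSubring B) (hBool : ∀ b ∈ B, b * b = b) (hM : IsMaxIdealOf M B)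
    {x y : R} (hx : x ∈ B) (hxM : x ∉ M) (hy : y ∈ B) (hyM : y ∉ M) :
    x * y ∉ M := by
  obtain ⟨⟨hMB, hM0, hMadd, hMneg, hMmul⟩, hMne, hMmax⟩ := hM
  set J : Set R := {c | c ∈ B ∧ c * x ∈ M} with hJ
  have hJideal : IsIdealOf J B := by
    refine ⟨fun c hc => hc.1, ⟨hsub.1, by rw [zero_mul]; exact hM0⟩, ?_, ?_, ?_⟩
    · rintro a ⟨haB, haM⟩ b ⟨hbB, hbM⟩
      exact ⟨hsub.2.1 a haB b hbB, by rw [add_mul]; exact hMadd _ haM _ hbM⟩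
    · rintro a ⟨haB, haM⟩
      exact ⟨hsub.2.2.1 a haB, by rw [neg_mul]; exact hMneg _ haM⟩
    · rintro b hbB c ⟨hcB, hcM⟩
      constructor
      · exact ⟨hsub.2.2.2 b hbB c hcB, by rw [mul_assoc]; exact (hMmul b hbB _ hcM).1⟩
      · refine ⟨hsub.2.2.2 c hcB b hbB, ?_⟩
        rw [nuBool_comm hsub hBool c hcB b hbB, mul_assoc]
        exact (hMmul b hbB _ hcM).1
  have hMJ : M ⊆ J := fun m hm => ⟨hMB hm, (hMmul x hx m hm).2⟩
  have hxJ : x ∉ J := by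
    rintro ⟨-, h⟩
    rw [hBool x hx] at h
    exact hxM h
  have hJB : J ≠ B := fun h => hxJ (h ▸ hx)
  rcases hMmax J hJideal hMJ with hJM | hJM
  · intro hxyM
    apply hyM
    have hyJ : y ∈ J := ⟨hy, by rw [nuBool_comm hsub hBool y hy x hx]; exact hxyM⟩
    rwa [hJM] at hyJ
  · exact absurd hJM hJB

/-- Let `R` be a `K`-algebra with `R = ⊕_{v ∈ V} Rv` over pairwise orthogonal
idempotents `V` contained in a Boolean subring `B`, and let `Rv/N` be a simple left
`R`-module (`v = e i₀`). If `S` is a set of maximal left ideals `P` of `R` whose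
traces `P ∩ B` are pairwise distinct maximal ideals of `B` and with `R/P ≅ Rv/N` for
all `P ∈ S`, then `|S| ≤ dim_K (Rv/N)`. -/
theorem card_boolean_maximal_ideals_le_rank
    {K R ι : Type*} [Field K] [NonUnitalRing R] [Module K R]
    [IsScalarTower K R R] [SMulCommClass K R R]
    (B : Set R) (hsub : IsNUSubring B) (hBool : ∀ b ∈ B, b * b = b)
    (e : ι → R) (heB : ∀ i, e i ∈ B)
    (hidem : ∀ i, e i * e i = e i)
    (horth : ∀ i j, i ≠ j → e i * e j = 0)
    (hgen : ∀ x : R, ∃ (t : Finset ι) (f : ι → R),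
      (∀ i ∈ t, f i * e i = f i) ∧ x = ∑ i ∈ t, f i)
    (hindep : ∀ (t : Finset ι) (f : ι → R),
      (∀ i ∈ t, f i * e i = f i) → ∑ i ∈ t, f i = 0 → ∀ i ∈ t, f i = 0)
    (i₀ : ι) (N : Submodule K R)
    (hNle : (N : Set R) ⊆ Rset (e i₀))
    (hNmul : ∀ (t : R), ∀ x ∈ N, t * x ∈ N)
    (hNmax : IsMaxSub (N : Set R) (Rset (e i₀)))
    (S : Set (Set R))
    (hS : ∀ P ∈ S, IsMaxLeftIdeal P ∧ QuotIso Set.univ P (Rset (e i₀)) (N : Set R))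
    (hSB : ∀ P ∈ S, IsMaxIdealOf (P ∩ B) B)
    (hSinj : ∀ P ∈ S, ∀ Q ∈ S, P ∩ B = Q ∩ B → P = Q) :
    Cardinal.mk S ≤
      Module.rank K (↥(RsetSub K (e i₀)) ⧸ N.comap (RsetSub K (e i₀)).subtype) := by
  classical
  set V₀ : Submodule K R := RsetSub K (e i₀) with hV₀
  set N' : Submodule K V₀ := N.comap V₀.subtype with hN'def
  have comm : ∀ a ∈ B, ∀ b ∈ B, a * b = b * a := nuBool_comm hsub hBool
  -- choose the module isomorphisms
  have hSf : ∀ P : S, ∃ f : R → R,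
      (∀ x ∈ Set.univ, f x ∈ Rset (e i₀)) ∧
      (∀ x ∈ Set.univ, ∀ y ∈ Set.univ, f (x + y) - (f x + f y) ∈ (N : Set R)) ∧
      (∀ (r : R), ∀ x ∈ Set.univ, f (r * x) - r * f x ∈ (N : Set R)) ∧
      (∀ y ∈ Rset (e i₀), ∃ x ∈ Set.univ, f x - y ∈ (N : Set R)) ∧
      (∀ x ∈ Set.univ, (x ∈ (P : Set R) ↔ f x ∈ (N : Set R))) :=
    fun P => (hS P.1 P.2).2
  choose f hf1 _hf2 hf3 _hf4 hf5 using hSf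
  -- choose an element of B outside each P
  have hSu : ∀ P : S, ∃ u, u ∈ B ∧ u ∉ (P : Set R) := by
    intro P
    have h : (P : Set R) ∩ B ≠ B := (hSB P.1 P.2).2.1
    have hss : (P : Set R) ∩ B ⊆ B := Set.inter_subset_right
    obtain ⟨w, hwB, hwP⟩ := Set.exists_of_ssubset (hss.ssubset_of_ne h)
    exact ⟨w, hwB, fun h' => hwP ⟨h', hwB⟩⟩
  choose u huB huP using hSu
  -- products outside P of elements of B stay outside P
  have hprodP : ∀ P : S, ∀ a ∈ B, a ∉ (P : Set R) → ∀ b ∈ B, b ∉ (P : Set R) →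
      a * b ∉ (P : Set R) := by
    intro P a ha haP b hb hbP habP
    exact nuBool_mul_notMem_max hsub hBool (hSB P.1 P.2) ha (fun h => haP h.1)
      hb (fun h => hbP h.1) ⟨habP, hsub.2.2.2 a ha b hb⟩
  -- the distinguished elements of Rv/N
  have hmemV : ∀ P : S, f P (u P) ∈ V₀ := fun P => hf1 P _ (Set.mem_univ _)
  set x : S → (V₀ ⧸ N') := fun P => Submodule.Quotient.mk ⟨f P (u P), hmemV P⟩ with hx
  -- multiplication criteria
  have keyzero : ∀ (P : S) (b : R), b * u P ∈ (P : Set R) → b * f P (u P) ∈ N := by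
    intro P b h
    have h1 : f P (b * u P) ∈ N := (hf5 P _ (Set.mem_univ _)).mp h
    have h2 : f P (b * u P) - b * f P (u P) ∈ N := hf3 P b _ (Set.mem_univ _)
    have h3 := N.sub_mem h1 h2
    simpa using h3
  have keynonzero : ∀ (P : S) (b : R), b * u P ∉ (P : Set R) → b * f P (u P) ∉ N := by
    intro P b h hmem
    apply h
    apply (hf5 P _ (Set.mem_univ _)).mpr
    have h2 : f P (b * u P) - b * f P (u P) ∈ N := hf3 P b _ (Set.mem_univ _)
    have h3 := N.add_mem h2 hmem
    simpa using h3
  -- multiplication by b descends to a K-linear map on the quotient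
  have hbmul : ∀ (b : R) (z : V₀), b * (z : R) ∈ V₀ := by
    intro b z
    obtain ⟨t, ht⟩ := z.2
    exact ⟨b * t, by rw [ht, mul_assoc]⟩
  have hLb : ∀ b : R, ∃ L : (V₀ ⧸ N') →ₗ[K] (V₀ ⧸ N'),
      ∀ z : V₀, L (Submodule.Quotient.mk z) =
        Submodule.Quotient.mk ⟨b * (z : R), hbmul b z⟩ := by
    intro b
    let L0 : V₀ →ₗ[K] V₀ :=
      { toFun := fun z => ⟨b * (z : R), hbmul b z⟩
        map_add' := fun z w => Subtype.ext (by simp [mul_add])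
        map_smul' := fun k z => Subtype.ext (by simp [mul_smul_comm]) }
    refine ⟨Submodule.mapQ N' N' L0 ?_, ?_⟩
    · intro z hz
      exact hNmul b (z : R) hz
    · intro z
      rfl
  -- linear independence
  have li : LinearIndependent K x := by
    rw [linearIndependent_iff']
    intro s g hsum Q hQ
    -- Chinese remainder element
    have hcrt : ∀ t : Finset S, Q ∉ t →
        ∃ b ∈ B, b ∉ (Q : Set R) ∧ ∀ P ∈ t, b ∈ (P : Set R) := by
      intro t
      induction t using Finset.induction_on with
      | empty => exact fun _ => ⟨u Q, huB Q, huP Q, by simp⟩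
      | @insert P t' hPt' ih =>
        intro hQ'
        have hQt' : Q ∉ t' := fun h => hQ' (Finset.mem_insert_of_mem h)
        have hPQ : P ≠ Q := fun h => hQ' (h ▸ Finset.mem_insert_self _ _)
        obtain ⟨b, hbB, hbQ, hbP⟩ := ih hQt'
        have hne : (P : Set R) ∩ B ≠ (Q : Set R) ∩ B :=
          fun h => hPQ (Subtype.ext (hSinj P.1 P.2 Q.1 Q.2 h))
        have hnsub : ¬ ((P : Set R) ∩ B ⊆ (Q : Set R) ∩ B) := by
          intro hss
          rcases (hSB P.1 P.2).2.2 ((Q : Set R) ∩ B) (hSB Q.1 Q.2).1 hss with h | h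
          · exact hne h.symm
          · exact (hSB Q.1 Q.2).2.1 h
        obtain ⟨c, hcPB, hcQB⟩ := Set.not_subset.mp hnsub
        have hcB : c ∈ B := hcPB.2
        have hcP : c ∈ (P : Set R) := hcPB.1
        have hcQ : c ∉ (Q : Set R) := fun h => hcQB ⟨h, hcB⟩
        refine ⟨b * c, hsub.2.2.2 b hbB c hcB, hprodP Q b hbB hbQ c hcB hcQ, ?_⟩
        intro P' hP'
        rcases Finset.mem_insert.mp hP' with rfl | hP't'
        · exact ((hS P'.1 P'.2).1).1.2.2.2 b c hcP
        · have h' : c * b ∈ (P' : Set R) :=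
            ((hS P'.1 P'.2).1).1.2.2.2 c b (hbP P' hP't')
          rwa [comm b hbB c hcB]
    obtain ⟨b, hbB, hbQ, hbP⟩ := hcrt (s.erase Q) (Finset.notMem_erase Q s)
    obtain ⟨L, hL⟩ := hLb b
    have h0 : (∑ P ∈ s, g P • L (x P)) = 0 := by
      have h := congrArg L hsum
      rw [map_sum, map_zero] at h
      simp only [LinearMap.map_smul] at h
      exact h
    have hz : ∀ P ∈ s, P ≠ Q → g P • L (x P) = 0 := by
      intro P hPs hPQ
      have hbP' : b ∈ (P : Set R) := hbP P (Finset.mem_erase.mpr ⟨hPQ, hPs⟩)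
      have h2 : b * u P ∈ (P : Set R) := by
        rw [comm b hbB (u P) (huB P)]
        exact ((hS P.1 P.2).1).1.2.2.2 (u P) b hbP'
      have hN0 : b * f P (u P) ∈ N := keyzero P b h2
      have hLx : L (x P) = 0 := by
        rw [hx]
        simp only []
        rw [hL, Submodule.Quotient.mk_eq_zero]
        exact hN0
      rw [hLx, smul_zero]
    have hsum2 : g Q • L (x Q) = 0 :=
      (Finset.sum_eq_single_of_mem Q hQ hz).symm.trans h0
    have hbu : b * u Q ∉ (Q : Set R) := hprodP Q b hbB hbQ (u Q) (huB Q) (huP Q)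
    have hnz : L (x Q) ≠ 0 := by
      rw [hx]
      simp only []
      rw [hL, Ne, Submodule.Quotient.mk_eq_zero]
      exact fun h => keynonzero Q b hbu h
    rcases smul_eq_zero.mp hsum2 with h | h
    · exact h
    · exact absurd h hnz
  exact li.cardinal_le_rank
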